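/- arXiv:math/0609126 — 6 statements merged into one kernel-verified Lean document; each statement's English description precedes it below -/
import Mathlib

section
/- Let 1 < p < ∞. For all real t > 0 and θ with -1 ≤ θ ≤ 1, the quantity f(t,θ) := (t² + 2θt + 1)^{p/2} - 1 - pθt is strictly positive. -/
open Real

theorem stmt_1 (p t θ : ℝ) (hp : 1 < p) (ht : 0 < t) (hθ₁ : -1 ≤ θ) (hθ₂ : θ ≤ 1) :
    0 < (t ^ 2 + 2 * θ * t + 1) ^ (p / 2) - 1 - p * θ * t := by
  have hp0 : 0 < p := by linarith
  have sq_rpow : ∀ x : ℝ, (x ^ 2) ^ (p / 2) = |x| ^ p := by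
    intro x
    rw [← sq_abs, ← Real.rpow_natCast |x| 2, ← Real.rpow_mul (abs_nonneg x)]
    norm_num
    rw [show 2 * (p / 2) = p by ring]
  rcases le_or_gt 2 p with h2 | h2
  · -- p ≥ 2 : Bernoulli with exponent p/2 ≥ 1
    have hs : (-1 : ℝ) ≤ t ^ 2 + 2 * θ * t := by nlinarith [sq_nonneg (t + θ)]
    have hb := one_add_mul_self_le_rpow_one_add hs (by linarith : (1:ℝ) ≤ p / 2)
    have he : 1 + (t ^ 2 + 2 * θ * t) = t ^ 2 + 2 * θ * t + 1 := by ring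
    rw [he] at hb
    nlinarith [sq_nonneg t, mul_pos hp0 (mul_pos ht ht)]
  · -- 1 < p < 2 : concavity in θ
    have key1 : 0 < (1 + t) ^ p - 1 - p * t := by
      have := one_add_mul_self_lt_rpow_one_add (by linarith : (-1:ℝ) ≤ t) (ne_of_gt ht) hp
      linarith
    have key2 : 0 < |t - 1| ^ p - 1 + p * t := by
      rcases lt_or_ge t 1 with h | h
      · have hb := one_add_mul_self_lt_rpow_one_add (s := -t) (by linarith) (by linarith) hp
        rw [abs_of_neg (by linarith : t - 1 < 0)]
        have he : 1 + -t = -(t - 1) := by ring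
        rw [he] at hb
        linarith
      · have h1 : 0 ≤ |t - 1| ^ p := rpow_nonneg (abs_nonneg _) p
        nlinarith [mul_le_mul_of_nonneg_left h hp0.le]
    have hc := (Real.strictConcaveOn_rpow (by linarith : (0:ℝ) < p / 2)
      (by linarith : p / 2 < 1)).concaveOn
    have hca := hc.2 (Set.mem_Ici.2 (sq_nonneg (t + 1))) (Set.mem_Ici.2 (sq_nonneg (t - 1)))
      (by linarith : (0:ℝ) ≤ (1 + θ) / 2) (by linarith : (0:ℝ) ≤ (1 - θ) / 2)
      (by ring : (1 + θ) / 2 + (1 - θ) / 2 = 1)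
    simp only [smul_eq_mul] at hca
    have he : (1 + θ) / 2 * (t + 1) ^ 2 + (1 - θ) / 2 * (t - 1) ^ 2
        = t ^ 2 + 2 * θ * t + 1 := by ring
    rw [he, sq_rpow, sq_rpow, abs_of_pos (by linarith : (0:ℝ) < t + 1)] at hca
    have ha : (0:ℝ) ≤ (1 + θ) / 2 := by linarith
    have hb : (0:ℝ) ≤ (1 - θ) / 2 := by linarith
    have h1t : t + 1 = 1 + t := by ring
    rw [h1t] at hca
    nlinarith [mul_le_mul_of_nonneg_left key1.le ha, mul_le_mul_of_nonneg_left key2.le hb]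
end

section
/- Let 1 < p < ∞ and -1 ≤ θ ≤ 1. Then the limit as t → 0⁺ of [(t² + 2θt + 1)^{p/2} - 1 - pθt] / [t²(1+t)^{p-2}] equals (p/2)(1 + (p-2)θ²), and this value is strictly positive. -/
/-!
The numerator is the second-order Taylor remainder at `0` of
`g t = (t ^ 2 + 2 θ t + 1) ^ (p / 2)`, since `g 0 = 1` and `g' 0 = p θ`; by L'Hôpital twice it is
asymptotic to `g'' 0 / 2 * t ^ 2` with `g'' 0 / 2 = (p / 2) (1 + (p - 2) θ ^ 2)`, while
`(1 + t) ^ (p - 2) → 1`. The limit is positive because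
`1 + (p - 2) θ ^ 2 = (1 - θ ^ 2) + (p - 1) θ ^ 2`.
-/

open Real Filter Topology

theorem tendsto_sub_sub_div_sq_nhdsNE {f f' f'' : ℝ → ℝ} {a : ℝ}
    (hf : ∀ᶠ x in 𝓝 a, HasDerivAt f (f' x) x)
    (hf' : ∀ᶠ x in 𝓝 a, HasDerivAt f' (f'' x) x) (hf'' : ContinuousAt f'' a) :
    Tendsto (fun x => (f x - f a - f' a * (x - a)) / (x - a) ^ 2) (𝓝[≠] a)
      (𝓝 (f'' a / 2)) := by
  have hsub : Tendsto (fun x : ℝ => x - a) (𝓝[≠] a) (𝓝 0) := by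
    simpa using (tendsto_id.sub_const a).mono_left (nhdsWithin_le_nhds (a := a))
  have hderiv_ratio : Tendsto (fun x => (f' x - f' a) / (2 * (x - a))) (𝓝[≠] a)
      (𝓝 (f'' a / 2)) := by
    refine HasDerivAt.lhopital_zero_nhdsNE (f' := f'') (g' := fun _ => 2)
      (nhdsWithin_le_nhds (hf'.mono fun x hx => hx.sub_const _))
      (Eventually.of_forall fun x => (((hasDerivAt_id x).sub_const a).const_mul 2).congr_deriv
        (mul_one 2)) (Eventually.of_forall fun _ => two_ne_zero) ?_ ?_
      ((hf''.tendsto.div_const 2).mono_left nhdsWithin_le_nhds)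
    · simpa using (hf'.self_of_nhds.continuousAt.tendsto.sub_const (f' a)).mono_left
        nhdsWithin_le_nhds
    · simpa using hsub.const_mul 2
  refine HasDerivAt.lhopital_zero_nhdsNE (f' := fun x => f' x - f' a)
    (g' := fun x => 2 * (x - a)) (nhdsWithin_le_nhds (hf.mono fun x hx => ?_))
    (Eventually.of_forall fun x => ?_) ?_ ?_ (by simpa using hsub.pow 2) hderiv_ratio
  · exact ((hx.sub_const _).sub (((hasDerivAt_id x).sub_const a).const_mul (f' a))).congr_deriv
      (by simp)
  · simpa using ((hasDerivAt_id x).sub_const a).fun_pow 2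
  · exact eventually_nhdsWithin_of_forall fun x hx =>
      mul_ne_zero two_ne_zero (sub_ne_zero.mpr hx)
  · have := (hf.self_of_nhds.continuousAt.tendsto.sub_const (f a)).sub
      (tendsto_const_nhds (x := f' a) |>.mul (tendsto_id.sub_const a))
    simpa using this.mono_left nhdsWithin_le_nhds

section QuadraticPower

variable (p θ : ℝ) (x : ℝ)

theorem hasDerivAt_quadratic :
    HasDerivAt (fun t => t ^ 2 + 2 * θ * t + 1) (2 * (x + θ)) x :=
  ((((hasDerivAt_id x).fun_pow 2).add ((hasDerivAt_id x).const_mul (2 * θ))).add_const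
    1).congr_deriv
      (by simp only [Nat.cast_ofNat, id_eq, Nat.add_one_sub_one, pow_one, mul_one]; ring)

variable {x}

theorem hasDerivAt_quadratic_rpow (hx : x ^ 2 + 2 * θ * x + 1 ≠ 0) :
    HasDerivAt (fun t => (t ^ 2 + 2 * θ * t + 1) ^ (p / 2))
      (p * (x + θ) * (x ^ 2 + 2 * θ * x + 1) ^ (p / 2 - 1)) x :=
  ((hasDerivAt_quadratic θ x).rpow_const (Or.inl hx)).congr_deriv (by ring)

theorem hasDerivAt_deriv_quadratic_rpow (hx : x ^ 2 + 2 * θ * x + 1 ≠ 0) :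
    HasDerivAt (fun t => p * (t + θ) * (t ^ 2 + 2 * θ * t + 1) ^ (p / 2 - 1))
      (p * (x ^ 2 + 2 * θ * x + 1) ^ (p / 2 - 1)
        + p * (p - 2) * (x + θ) ^ 2 * (x ^ 2 + 2 * θ * x + 1) ^ (p / 2 - 2)) x := by
  refine ((((hasDerivAt_id' x).add_const θ).const_mul p).fun_mul
    ((hasDerivAt_quadratic θ x).rpow_const (p := p / 2 - 1) (Or.inl hx))).congr_deriv ?_
  rw [show p / 2 - 1 - 1 = p / 2 - 2 by ring]
  ring

end QuadraticPower

theorem one_add_sub_two_mul_sq_pos {p θ : ℝ} (hp : 1 < p) (hθ : θ ^ 2 ≤ 1) :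
    0 < 1 + (p - 2) * θ ^ 2 := by
  nlinarith [mul_nonneg (sub_nonneg.mpr hp.le) (sq_nonneg θ)]

theorem stmt_3 (p θ : ℝ) (hp : 1 < p) (hθ₁ : -1 ≤ θ) (hθ₂ : θ ≤ 1) :
    Tendsto (fun t : ℝ =>
        ((t ^ 2 + 2 * θ * t + 1) ^ (p / 2) - 1 - p * θ * t) / (t ^ 2 * (1 + t) ^ (p - 2)))
      (nhdsWithin 0 (Set.Ioi 0)) (nhds ((p / 2) * (1 + (p - 2) * θ ^ 2))) ∧
    0 < (p / 2) * (1 + (p - 2) * θ ^ 2) := by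
  have hQ : ∀ᶠ x in 𝓝 (0 : ℝ), x ^ 2 + 2 * θ * x + 1 ≠ 0 :=
    (hasDerivAt_quadratic θ 0).continuousAt.eventually_ne (by norm_num)
  have htaylor := tendsto_sub_sub_div_sq_nhdsNE
    (hQ.mono fun x hx => hasDerivAt_quadratic_rpow p θ hx)
    (hQ.mono fun x hx => hasDerivAt_deriv_quadratic_rpow p θ hx) (by fun_prop (disch := norm_num))
  have hfactor : Tendsto (fun t : ℝ => (1 + t) ^ (p - 2)) (𝓝[>] 0) (𝓝 1) := by
    have : ContinuousAt (fun t : ℝ => (1 + t) ^ (p - 2)) 0 := by fun_prop (disch := norm_num)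
    simpa using this.tendsto.mono_left nhdsWithin_le_nhds
  refine ⟨?_, mul_pos (by linarith) (one_add_sub_two_mul_sq_pos hp (by nlinarith))⟩
  convert (htaylor.mono_left (nhdsGT_le_nhdsNE 0)).div hfactor one_ne_zero using 2 with t
  · simp [div_div]
  · norm_num; ring
end

section
/- Let 1 < p < ∞ and d ≥ 1. There exists a constant C ≥ 1 depending only on p such that for all vectors a, b ∈ ℝ^d (with a ≠ 0 or interpreting |a|^{p-2}a·b as 0 when a = 0): C⁻¹ |b|² (|a|+|b|)^{p-2} ≤ |a+b|^p - |a|^p - p|a|^{p-2} a·b ≤ C |b|² (|a|+|b|)^{p-2}. -/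
/-!
Put `φ t = ‖a + t • b‖ ^ p`. The quantity to be estimated is `φ 1 - φ 0 - φ' 0`, which equals
`∫ t in 0..1, (1 - t) * φ'' t`, and `φ'' t` lies between `p * min 1 (p - 1) * ‖b‖ ^ 2 * w t` and
`p * max 1 (p - 1) * ‖b‖ ^ 2 * w t` with `w t = ‖a + t • b‖ ^ (p - 2)`. Everything depends only on
`α = ‖a‖`, `β = ‖b‖` and `B = ⟪a, b⟫`, so the argument is run on these scalars.

Since `‖a + t • b‖ ≤ α + β` on `[0, 1]`, and `‖a + t • b‖ ≥ (α + β) / 10` on an interval of length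
`1 / 8` inside `[0, 1 / 2]`, the integral of `(1 - t) * w t` is at least a constant times
`(α + β) ^ (p - 2)`. It is also at most such a multiple when `2 * β ≤ α`, because then
`‖a + t • b‖ ≥ (α + β) / 3`. When `α ≤ 2 * β` no cancellation is needed: the remainder is at
most `(p + 1) * (α + β) ^ p ≤ 9 * (p + 1) * β ^ 2 * (α + β) ^ (p - 2)` term by term.

The formula for `φ''` requires the segment to avoid the origin, which `|B| < α * β` guarantees;
the case `|B| = α * β` follows by continuity in `B`.
-/

open Real
open scoped RealInnerProductSpace

open Set MeasureTheory intervalIntegral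

namespace Real

theorem sq_rpow_div_two {x : ℝ} (hx : 0 ≤ x) (r : ℝ) : (x ^ 2) ^ (r / 2) = x ^ r := by
  rw [← rpow_natCast_mul hx]
  congr 1
  push_cast
  ring

theorem rpow_div_two_eq_sqrt_rpow {x : ℝ} (hx : 0 ≤ x) (r : ℝ) : x ^ (r / 2) = √x ^ r := by
  rw [← sq_rpow_div_two (sqrt_nonneg x), sq_sqrt hx]

theorem min_rpow_le_rpow {m M y : ℝ} (hm : 0 < m) (hy : y ∈ Icc m M) (r : ℝ) :
    min (m ^ r) (M ^ r) ≤ y ^ r := by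
  rcases le_total 0 r with hr | hr
  · exact (min_le_left _ _).trans (rpow_le_rpow hm.le hy.1 hr)
  · exact (min_le_right _ _).trans (rpow_le_rpow_of_nonpos (hm.trans_le hy.1) hy.2 hr)

theorem rpow_le_max_rpow {m M y : ℝ} (hm : 0 < m) (hy : y ∈ Icc m M) (r : ℝ) :
    y ^ r ≤ max (m ^ r) (M ^ r) := by
  rcases le_total 0 r with hr | hr
  · exact (rpow_le_rpow (hm.le.trans hy.1) hy.2 hr).trans (le_max_right _ _)
  · exact (rpow_le_rpow_of_nonpos hm hy.1 hr).trans (le_max_left _ _)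

theorem sqrt_mem_Icc_div {x M c : ℝ} (hM : 0 < M) (hc : 0 < c)
    (hx : x ∈ Icc ((M / c) ^ 2) (M ^ 2)) :
    √x ∈ Icc (M / c) M :=
  ⟨(le_sqrt' (by positivity)).2 hx.1, (sqrt_le_sqrt hx.2).trans_eq (sqrt_sq hM.le)⟩

theorem div_rpow_eq_rpow_neg_mul {x c : ℝ} (hx : 0 ≤ x) (hc : 0 < c) (r : ℝ) :
    (x / c) ^ r = c ^ (-r) * x ^ r := by
  rw [div_rpow hx hc.le, rpow_neg hc.le, div_eq_inv_mul]

theorem min_mul_rpow_le_rpow_div_two {x M c : ℝ} (hM : 0 < M) (hc : 0 < c)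
    (hx : x ∈ Icc ((M / c) ^ 2) (M ^ 2)) (r : ℝ) :
    min (c ^ (-r)) 1 * M ^ r ≤ x ^ (r / 2) := by
  rw [min_mul_of_nonneg _ _ (rpow_nonneg hM.le r), one_mul, ← div_rpow_eq_rpow_neg_mul hM.le hc,
    rpow_div_two_eq_sqrt_rpow ((sq_nonneg _).trans hx.1)]
  exact min_rpow_le_rpow (by positivity) (sqrt_mem_Icc_div hM hc hx) r

theorem rpow_div_two_le_max_mul_rpow {x M c : ℝ} (hM : 0 < M) (hc : 0 < c)
    (hx : x ∈ Icc ((M / c) ^ 2) (M ^ 2)) (r : ℝ) :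
    x ^ (r / 2) ≤ max (c ^ (-r)) 1 * M ^ r := by
  rw [max_mul_of_nonneg _ _ (rpow_nonneg hM.le r), one_mul, ← div_rpow_eq_rpow_neg_mul hM.le hc,
    rpow_div_two_eq_sqrt_rpow ((sq_nonneg _).trans hx.1)]
  exact rpow_le_max_rpow (by positivity) (sqrt_mem_Icc_div hM hc hx) r

theorem sq_mul_rpow_sub_two {x p : ℝ} (hx : 0 ≤ x) (hp : p ≠ 0) : x ^ 2 * x ^ (p - 2) = x ^ p := by
  rw [← rpow_two, ← rpow_add' hx (by simpa using hp), add_sub_cancel]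

end Real

theorem sub_sub_deriv_eq_integral_one_sub_mul {g g' g'' : ℝ → ℝ}
    (hg : ∀ t ∈ Icc (0 : ℝ) 1, HasDerivAt g (g' t) t)
    (hg' : ∀ t ∈ Icc (0 : ℝ) 1, HasDerivAt g' (g'' t) t)
    (hg'' : ContinuousOn g'' (Icc 0 1)) :
    g 1 - g 0 - g' 0 = ∫ t in (0 : ℝ)..1, (1 - t) * g'' t := by
  have hF : ∀ t ∈ uIcc (0 : ℝ) 1,
      HasDerivAt (fun s ↦ (1 - s) * g' s + g s) ((1 - t) * g'' t) t := by
    intro t ht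
    rw [uIcc_of_le zero_le_one] at ht
    exact ((((hasDerivAt_id' t).const_sub 1).mul (hg' t ht)).add (hg t ht)).congr_deriv (by ring)
  rw [integral_eq_sub_of_hasDerivAt hF
    (((continuousOn_const.sub continuousOn_id).mul hg'').intervalIntegrable_of_Icc zero_le_one)]
  ring

namespace NormRpowTaylor

/-- `lineNormSq ‖a‖ ‖b‖ ⟪a, b⟫ t = ‖a + t • b‖ ^ 2`. -/
def lineNormSq (α β B t : ℝ) : ℝ := α ^ 2 + 2 * B * t + β ^ 2 * t ^ 2

noncomputable def weight (p α β B t : ℝ) : ℝ := lineNormSq α β B t ^ ((p - 2) / 2)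

/-- The second derivative of `t ↦ ‖a + t • b‖ ^ p`. -/
noncomputable def normRpowDeriv2 (p α β B t : ℝ) : ℝ :=
  p * ((p - 2) * lineNormSq α β B t ^ ((p - 4) / 2) * (B + β ^ 2 * t) ^ 2 +
    weight p α β B t * β ^ 2)

/-- `taylorRemainder p ‖a‖ ‖b‖ ⟪a, b⟫ = ‖a + b‖ ^ p - ‖a‖ ^ p - p * ‖a‖ ^ (p - 2) * ⟪a, b⟫`. -/
noncomputable def taylorRemainder (p α β B : ℝ) : ℝ :=
  (α ^ 2 + 2 * B + β ^ 2) ^ (p / 2) - α ^ p - p * α ^ (p - 2) * B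

noncomputable def lowerConst (p : ℝ) : ℝ := p * min 1 (p - 1) * (min (10 ^ (2 - p)) 1 / 16)

noncomputable def upperConst (p : ℝ) : ℝ :=
  max (p * max 1 (p - 1) * (max (3 ^ (2 - p)) 1 / 2)) (9 * (p + 1))

variable {p α β B : ℝ}

theorem sq_mul_lineNormSq (α β B t : ℝ) :
    β ^ 2 * lineNormSq α β B t = (B + β ^ 2 * t) ^ 2 + ((α * β) ^ 2 - B ^ 2) := by
  unfold lineNormSq
  ring

theorem lineNormSq_pos (hB : |B| < α * β) (t : ℝ) : 0 < lineNormSq α β B t := by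
  have hB' : B ^ 2 < (α * β) ^ 2 := sq_lt_sq' (abs_lt.1 hB).1 (abs_lt.1 hB).2
  have h : 0 < β ^ 2 * lineNormSq α β B t := by
    rw [sq_mul_lineNormSq]
    nlinarith [sq_nonneg (B + β ^ 2 * t)]
  exact pos_of_mul_pos_right h (sq_nonneg β)

theorem lineNormSq_le_sq {t : ℝ} (hα : 0 ≤ α) (hβ : 0 ≤ β) (hB : B ≤ α * β)
    (ht : t ∈ Icc (0 : ℝ) 1) : lineNormSq α β B t ≤ (α + β) ^ 2 := by
  unfold lineNormSq
  nlinarith [mul_le_mul_of_nonneg_right hB ht.1, mul_nonneg hβ ht.1,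
    mul_nonneg hβ (sub_nonneg.2 ht.2), mul_nonneg hα hβ]

theorem sq_sub_le_lineNormSq {t : ℝ} (hB : -(α * β) ≤ B) (ht : 0 ≤ t) :
    (α - β * t) ^ 2 ≤ lineNormSq α β B t := by
  unfold lineNormSq
  nlinarith [mul_le_mul_of_nonneg_right hB ht]

theorem exists_Icc_sq_le_lineNormSq (hα : 0 ≤ α) (hβ : 0 ≤ β) (hB : -(α * β) ≤ B) :
    ∃ s, 0 ≤ s ∧ s + 1 / 8 ≤ 1 / 2 ∧
      ∀ t ∈ Icc s (s + 1 / 8), ((α + β) / 10) ^ 2 ≤ lineNormSq α β B t := by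
  rcases le_total β (4 * α) with hβα | hαβ
  · refine ⟨0, le_rfl, by norm_num, fun t ht ↦ ?_⟩
    have hle : (α + β) / 10 ≤ α - β * t := by nlinarith [ht.2, mul_nonneg hβ ht.1]
    exact (pow_le_pow_left₀ (by positivity) hle 2).trans (sq_sub_le_lineNormSq hB ht.1)
  · refine ⟨3 / 8, by norm_num, by norm_num, fun t ht ↦ ?_⟩
    have hle : (α + β) / 10 ≤ β * t - α := by nlinarith [mul_le_mul_of_nonneg_left ht.1 hβ]
    have h := sq_sub_le_lineNormSq hB (t := t) (by linarith [ht.1])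
    rw [← neg_sub, neg_sq] at h
    exact (pow_le_pow_left₀ (by positivity) hle 2).trans h

theorem continuous_lineNormSq : Continuous (lineNormSq α β B) := by
  unfold lineNormSq
  fun_prop

theorem continuous_lineNormSq_rpow (hB : |B| < α * β) (s : ℝ) :
    Continuous fun t ↦ lineNormSq α β B t ^ s :=
  continuous_lineNormSq.rpow_const fun t ↦ Or.inl (lineNormSq_pos hB t).ne'

theorem continuous_weight (hB : |B| < α * β) : Continuous (weight p α β B) :=
  continuous_lineNormSq_rpow hB _

theorem continuous_normRpowDeriv2 (hB : |B| < α * β) : Continuous (normRpowDeriv2 p α β B) := by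
  have := continuous_lineNormSq_rpow hB ((p - 4) / 2)
  have := continuous_weight (p := p) hB
  unfold normRpowDeriv2
  fun_prop

theorem hasDerivAt_lineNormSq (t : ℝ) :
    HasDerivAt (lineNormSq α β B) (2 * (B + β ^ 2 * t)) t := by
  have := (((hasDerivAt_id' t).const_mul (2 * B)).const_add (α ^ 2)).add
    ((hasDerivAt_pow 2 t).const_mul (β ^ 2))
  exact this.congr_deriv (by push_cast; ring)

theorem hasDerivAt_lineNormSq_rpow {t : ℝ} (hq : 0 < lineNormSq α β B t) (s : ℝ) :
    HasDerivAt (fun t ↦ lineNormSq α β B t ^ s)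
      (2 * s * lineNormSq α β B t ^ (s - 1) * (B + β ^ 2 * t)) t :=
  ((hasDerivAt_lineNormSq t).rpow_const (Or.inl hq.ne')).congr_deriv (by ring)

theorem taylorRemainder_eq_integral (hα : 0 ≤ α) (hB : |B| < α * β) :
    taylorRemainder p α β B = ∫ t in (0 : ℝ)..1, (1 - t) * normRpowDeriv2 p α β B t := by
  have hq := lineNormSq_pos hB
  have hg : ∀ t, HasDerivAt (fun t ↦ lineNormSq α β B t ^ (p / 2))
      (p * weight p α β B t * (B + β ^ 2 * t)) t := fun t ↦
    (hasDerivAt_lineNormSq_rpow (hq t) _).congr_deriv <| by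
      rw [weight, show p / 2 - 1 = (p - 2) / 2 by ring]
      ring
  have hg' : ∀ t, HasDerivAt (fun t ↦ p * weight p α β B t * (B + β ^ 2 * t))
      (normRpowDeriv2 p α β B t) t := by
    intro t
    have hL : HasDerivAt (fun t ↦ B + β ^ 2 * t) (β ^ 2) t :=
      ((hasDerivAt_id' t).const_mul (β ^ 2)).const_add B |>.congr_deriv (mul_one _)
    refine (((hasDerivAt_lineNormSq_rpow (hq t) _).const_mul p).mul hL).congr_deriv ?_
    rw [normRpowDeriv2, weight, show (p - 2) / 2 - 1 = (p - 4) / 2 by ring]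
    ring
  rw [← sub_sub_deriv_eq_integral_one_sub_mul (fun t _ ↦ hg t) (fun t _ ↦ hg' t)
    (continuous_normRpowDeriv2 hB).continuousOn]
  simp only [weight, lineNormSq, taylorRemainder]
  rw [← sq_rpow_div_two hα (p - 2), ← sq_rpow_div_two hα p]
  norm_num

theorem normRpowDeriv2_bounds (hp : 1 < p) (hB : |B| < α * β) (t : ℝ) :
    p * min 1 (p - 1) * β ^ 2 * weight p α β B t ≤ normRpowDeriv2 p α β B t ∧
      normRpowDeriv2 p α β B t ≤ p * max 1 (p - 1) * β ^ 2 * weight p α β B t := by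
  have hq := lineNormSq_pos hB t
  unfold normRpowDeriv2 weight
  set q := lineNormSq α β B t
  set x := q ^ ((p - 4) / 2)
  have hx : 0 ≤ x := rpow_nonneg hq.le _
  have hqx : q ^ ((p - 2) / 2) = x * q := by
    rw [← rpow_add_one hq.ne']
    ring_nf
  have hB' : B ^ 2 ≤ (α * β) ^ 2 := sq_le_sq' (abs_le.1 hB.le).1 (abs_le.1 hB.le).2
  have hL : (B + β ^ 2 * t) ^ 2 ≤ β ^ 2 * q := by
    rw [sq_mul_lineNormSq]
    linarith
  have hL0 := sq_nonneg (B + β ^ 2 * t)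
  rw [hqx]
  rcases le_total 2 p with h2 | h2
  · rw [min_eq_left (by linarith), max_eq_right (by linarith)]
    constructor
    · nlinarith [mul_nonneg (mul_nonneg (sub_nonneg.2 h2) hx) hL0]
    · nlinarith [mul_le_mul_of_nonneg_left hL (mul_nonneg (sub_nonneg.2 h2) hx)]
  · rw [min_eq_right (by linarith), max_eq_left (by linarith)]
    constructor
    · nlinarith [mul_le_mul_of_nonneg_left hL (mul_nonneg (sub_nonneg.2 h2) hx)]
    · nlinarith [mul_nonneg (mul_nonneg (sub_nonneg.2 h2) hx) hL0]

theorem taylorRemainder_bounds_integral (hp : 1 < p) (hα : 0 ≤ α) (hB : |B| < α * β) :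
    p * min 1 (p - 1) * β ^ 2 * ∫ t in (0 : ℝ)..1, (1 - t) * weight p α β B t
        ≤ taylorRemainder p α β B ∧
      taylorRemainder p α β B ≤
        p * max 1 (p - 1) * β ^ 2 * ∫ t in (0 : ℝ)..1, (1 - t) * weight p α β B t := by
  have := continuous_weight (p := p) hB
  have := continuous_normRpowDeriv2 (p := p) hB
  have hw : IntervalIntegrable (fun t ↦ (1 - t) * weight p α β B t) volume 0 1 :=
    Continuous.intervalIntegrable (by fun_prop) _ _
  have hd : IntervalIntegrable (fun t ↦ (1 - t) * normRpowDeriv2 p α β B t) volume 0 1 :=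
    Continuous.intervalIntegrable (by fun_prop) _ _
  rw [taylorRemainder_eq_integral hα hB, ← intervalIntegral.integral_const_mul,
    ← intervalIntegral.integral_const_mul]
  constructor
  · refine integral_mono_on zero_le_one (hw.const_mul _) hd fun t ht ↦ ?_
    rw [mul_left_comm]
    exact mul_le_mul_of_nonneg_left (normRpowDeriv2_bounds hp hB t).1 (by linarith [ht.2])
  · refine integral_mono_on zero_le_one hd (hw.const_mul _) fun t ht ↦ ?_
    rw [mul_left_comm _ (1 - t)]
    exact mul_le_mul_of_nonneg_left (normRpowDeriv2_bounds hp hB t).2 (by linarith [ht.2])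

theorem le_integral_one_sub_mul_weight (hα : 0 < α) (hβ : 0 < β) (hB : |B| < α * β) :
    min (10 ^ (2 - p)) 1 / 16 * (α + β) ^ (p - 2) ≤
      ∫ t in (0 : ℝ)..1, (1 - t) * weight p α β B t := by
  obtain ⟨hB₁, hB₂⟩ := abs_le.1 hB.le
  obtain ⟨s, hs0, hs, hsq⟩ := exists_Icc_sq_le_lineNormSq hα.le hβ.le hB₁
  have hw : ∀ t ∈ Icc s (s + 1 / 8),
      min (10 ^ (2 - p)) 1 * (α + β) ^ (p - 2) ≤ weight p α β B t := by
    intro t ht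
    rw [weight, show 2 - p = -(p - 2) by ring]
    exact min_mul_rpow_le_rpow_div_two (by positivity) (by norm_num)
      ⟨hsq t ht, lineNormSq_le_sq hα.le hβ.le hB₂ ⟨by linarith [ht.1], by linarith [ht.2]⟩⟩ _
  have := continuous_weight (p := p) hB
  have hint : ∀ a b, IntervalIntegrable (fun t ↦ (1 - t) * weight p α β B t) volume a b :=
    fun a b ↦ Continuous.intervalIntegrable (by fun_prop) a b
  calc min (10 ^ (2 - p)) 1 / 16 * (α + β) ^ (p - 2)
      = ∫ _ in s..s + 1 / 8, 1 / 2 * (min (10 ^ (2 - p)) 1 * (α + β) ^ (p - 2)) := by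
        simp only [intervalIntegral.integral_const, smul_eq_mul]
        ring
    _ ≤ ∫ t in s..s + 1 / 8, (1 - t) * weight p α β B t :=
        integral_mono_on (by linarith) intervalIntegrable_const (hint _ _) fun t ht ↦
          mul_le_mul (by linarith [ht.2]) (hw t ht) (by positivity) (by linarith [ht.2])
    _ ≤ ∫ t in (0 : ℝ)..1, (1 - t) * weight p α β B t := by
        refine integral_mono_interval hs0 (by linarith) (by linarith) ?_ (hint _ _)
        refine (ae_restrict_iff' measurableSet_Ioc).2 (ae_of_all _ fun t ht ↦ ?_)
        exact mul_nonneg (by linarith [ht.2]) (rpow_nonneg (lineNormSq_pos hB t).le _)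

theorem integral_one_sub_mul_weight_le (hα : 0 < α) (hβ : 0 < β) (hB : |B| < α * β)
    (hβα : 2 * β ≤ α) :
    ∫ t in (0 : ℝ)..1, (1 - t) * weight p α β B t ≤
      max (3 ^ (2 - p)) 1 / 2 * (α + β) ^ (p - 2) := by
  obtain ⟨hB₁, hB₂⟩ := abs_le.1 hB.le
  have hw : ∀ t ∈ Icc (0 : ℝ) 1, weight p α β B t ≤ max (3 ^ (2 - p)) 1 * (α + β) ^ (p - 2) := by
    intro t ht
    have hle : (α + β) / 3 ≤ α - β * t := by nlinarith [mul_le_mul_of_nonneg_left ht.2 hβ.le]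
    rw [weight, show 2 - p = -(p - 2) by ring]
    exact rpow_div_two_le_max_mul_rpow (by positivity) (by norm_num)
      ⟨(pow_le_pow_left₀ (by positivity) hle 2).trans (sq_sub_le_lineNormSq hB₁ ht.1),
        lineNormSq_le_sq hα.le hβ.le hB₂ ht⟩ _
  have := continuous_weight (p := p) hB
  calc ∫ t in (0 : ℝ)..1, (1 - t) * weight p α β B t
      ≤ ∫ t in (0 : ℝ)..1, (1 - t) * (max (3 ^ (2 - p)) 1 * (α + β) ^ (p - 2)) :=
        integral_mono_on zero_le_one (Continuous.intervalIntegrable (by fun_prop) _ _)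
          (Continuous.intervalIntegrable (by fun_prop) _ _) fun t ht ↦
          mul_le_mul_of_nonneg_left (hw t ht) (by linarith [ht.2])
    _ = max (3 ^ (2 - p)) 1 / 2 * (α + β) ^ (p - 2) := by
        rw [intervalIntegral.integral_mul_const,
          integral_sub intervalIntegrable_const intervalIntegral.intervalIntegrable_id]
        norm_num [integral_id]
        ring

theorem taylorRemainder_le_of_le_two_mul (hp : 1 < p) (hα : 0 < α) (hB : |B| ≤ α * β)
    (hαβ : α ≤ 2 * β) :
    taylorRemainder p α β B ≤ 9 * (p + 1) * (β ^ 2 * (α + β) ^ (p - 2)) := by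
  obtain ⟨hB₁, hB₂⟩ := abs_le.1 hB
  have hβ : 0 < β := by linarith
  have hS : 0 < α + β := by linarith
  have h₁ : (α ^ 2 + 2 * B + β ^ 2) ^ (p / 2) ≤ (α + β) ^ p := by
    rw [← sq_rpow_div_two hS.le p]
    exact rpow_le_rpow (by nlinarith [sq_nonneg (α - β)]) (by nlinarith) (by linarith)
  have h₂ : -(p * α ^ (p - 2) * B) ≤ p * (α + β) ^ p :=
    calc -(p * α ^ (p - 2) * B) ≤ p * α ^ (p - 2) * (α * β) := by
          have : 0 ≤ p * α ^ (p - 2) := by have := rpow_nonneg hα.le (p - 2); positivity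
          nlinarith
      _ = p * α ^ (p - 1) * β := by
          rw [show p - 1 = p - 2 + 1 by ring, rpow_add_one hα.ne']
          ring
      _ ≤ p * (α + β) ^ (p - 1) * (α + β) := by gcongr <;> linarith
      _ = p * (α + β) ^ p := by rw [mul_assoc, ← rpow_add_one hS.ne', sub_add_cancel]
  have h₃ : (α + β) ^ p ≤ 9 * (β ^ 2 * (α + β) ^ (p - 2)) := by
    rw [← sq_mul_rpow_sub_two hS.le (by linarith), ← mul_assoc]
    gcongr
    nlinarith
  have h₄ := rpow_nonneg hα.le p
  unfold taylorRemainder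
  nlinarith

theorem lowerConst_pos (hp : 1 < p) : 0 < lowerConst p := by
  have : 0 < min 1 (p - 1) := lt_min one_pos (by linarith)
  have : 0 < min ((10 : ℝ) ^ (2 - p)) 1 := lt_min (by positivity) one_pos
  have := zero_lt_one.trans hp
  unfold lowerConst
  positivity

theorem taylorRemainder_bounds_of_abs_lt (hp : 1 < p) (hα : 0 < α) (hβ : 0 < β)
    (hB : |B| < α * β) :
    lowerConst p * (β ^ 2 * (α + β) ^ (p - 2)) ≤ taylorRemainder p α β B ∧
      taylorRemainder p α β B ≤ upperConst p * (β ^ 2 * (α + β) ^ (p - 2)) := by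
  obtain ⟨hlow, hup⟩ := taylorRemainder_bounds_integral hp hα.le hB
  have := zero_lt_one.trans hp
  have hκ₁ : 0 ≤ p * min 1 (p - 1) * β ^ 2 := by
    have : 0 < min 1 (p - 1) := lt_min one_pos (by linarith)
    positivity
  have hκ₂ : 0 ≤ p * max 1 (p - 1) * β ^ 2 := by
    have : 0 < max 1 (p - 1) := lt_max_of_lt_left one_pos
    positivity
  have hX : 0 ≤ β ^ 2 * (α + β) ^ (p - 2) := by
    have := rpow_nonneg (add_pos hα hβ).le (p - 2)
    positivity
  constructor
  · calc lowerConst p * (β ^ 2 * (α + β) ^ (p - 2))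
        = p * min 1 (p - 1) * β ^ 2 * (min (10 ^ (2 - p)) 1 / 16 * (α + β) ^ (p - 2)) := by
          unfold lowerConst
          ring
      _ ≤ _ := mul_le_mul_of_nonneg_left (le_integral_one_sub_mul_weight hα hβ hB) hκ₁
      _ ≤ _ := hlow
  · rcases le_total α (2 * β) with hαβ | hβα
    · exact (taylorRemainder_le_of_le_two_mul hp hα hB.le hαβ).trans
        (mul_le_mul_of_nonneg_right (le_max_right _ _) hX)
    · calc taylorRemainder p α β B
          ≤ p * max 1 (p - 1) * β ^ 2 * (max (3 ^ (2 - p)) 1 / 2 * (α + β) ^ (p - 2)) :=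
            hup.trans (mul_le_mul_of_nonneg_left
              (integral_one_sub_mul_weight_le hα hβ hB hβα) hκ₂)
        _ = p * max 1 (p - 1) * (max (3 ^ (2 - p)) 1 / 2) * (β ^ 2 * (α + β) ^ (p - 2)) := by
            ring
        _ ≤ _ := mul_le_mul_of_nonneg_right (le_max_left _ _) hX

theorem taylorRemainder_bounds (hp : 1 < p) (hα : 0 < α) (hβ : 0 < β) (hB : |B| ≤ α * β) :
    lowerConst p * (β ^ 2 * (α + β) ^ (p - 2)) ≤ taylorRemainder p α β B ∧
      taylorRemainder p α β B ≤ upperConst p * (β ^ 2 * (α + β) ^ (p - 2)) := by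
  have hcont : Continuous (taylorRemainder p α β) := by
    have := continuous_rpow_const (q := p / 2) (by linarith)
    unfold taylorRemainder
    fun_prop
  have hclosed : IsClosed {B | lowerConst p * (β ^ 2 * (α + β) ^ (p - 2)) ≤
      taylorRemainder p α β B ∧
        taylorRemainder p α β B ≤ upperConst p * (β ^ 2 * (α + β) ^ (p - 2))} :=
    (isClosed_le continuous_const hcont).inter (isClosed_le hcont continuous_const)
  have hB' : B ∈ closure (Ioo (-(α * β)) (α * β)) := by
    rw [closure_Ioo (by nlinarith [mul_pos hα hβ])]
    exact abs_le.1 hB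
  exact closure_minimal (fun B hB ↦ taylorRemainder_bounds_of_abs_lt hp hα hβ (abs_lt.2 hB))
    hclosed hB'

end NormRpowTaylor

open NormRpowTaylor in
theorem exists_inv_mul_le_norm_add_rpow_sub_and_le_mul {E : Type*} [NormedAddCommGroup E]
    [InnerProductSpace ℝ E] (p : ℝ) (hp : 1 < p) :
    ∃ C : ℝ, 1 ≤ C ∧ ∀ a b : E,
      C⁻¹ * (‖b‖ ^ 2 * (‖a‖ + ‖b‖) ^ (p - 2)) ≤
          ‖a + b‖ ^ p - ‖a‖ ^ p - p * ‖a‖ ^ (p - 2) * ⟪a, b⟫ ∧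
        ‖a + b‖ ^ p - ‖a‖ ^ p - p * ‖a‖ ^ (p - 2) * ⟪a, b⟫ ≤
          C * (‖b‖ ^ 2 * (‖a‖ + ‖b‖) ^ (p - 2)) := by
  set C := max (max (upperConst p) (lowerConst p)⁻¹) 1
  have hC : 1 ≤ C := le_max_right _ _
  refine ⟨C, hC, fun a b ↦ ?_⟩
  rcases eq_or_ne a 0 with rfl | ha
  · have hp0 : p ≠ 0 := by linarith
    simp only [zero_add, norm_zero, zero_rpow hp0, inner_zero_left, mul_zero, sub_zero]
    rw [sq_mul_rpow_sub_two (norm_nonneg b) hp0]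
    have hX := rpow_nonneg (norm_nonneg b) p
    exact ⟨mul_le_of_le_one_left hX (inv_le_one_of_one_le₀ hC), le_mul_of_one_le_left hX hC⟩
  rcases eq_or_ne b 0 with rfl | hb
  · simp
  have hX : 0 ≤ ‖b‖ ^ 2 * (‖a‖ + ‖b‖) ^ (p - 2) := by positivity
  have key := taylorRemainder_bounds hp (norm_pos_iff.2 ha) (norm_pos_iff.2 hb)
    (abs_real_inner_le_norm a b)
  rw [taylorRemainder, ← norm_add_sq_real, sq_rpow_div_two (norm_nonneg _)] at key
  have hlow : C⁻¹ ≤ lowerConst p :=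
    inv_le_of_inv_le₀ (lowerConst_pos hp) ((le_max_right _ _).trans (le_max_left _ _))
  have hup : upperConst p ≤ C := (le_max_left _ _).trans (le_max_left _ _)
  exact ⟨(mul_le_mul_of_nonneg_right hlow hX).trans key.1,
    key.2.trans (mul_le_mul_of_nonneg_right hup hX)⟩

theorem stmt_5_general (p : ℝ) (hp₁ : 1 < p) (d : ℕ) :
    ∃ C : ℝ, 1 ≤ C ∧ ∀ a b : EuclideanSpace ℝ (Fin d),
      C⁻¹ * (‖b‖ ^ 2 * (‖a‖ + ‖b‖) ^ (p - 2)) ≤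
          ‖a + b‖ ^ p - ‖a‖ ^ p - p * ‖a‖ ^ (p - 2) * ⟪a, b⟫ ∧
        ‖a + b‖ ^ p - ‖a‖ ^ p - p * ‖a‖ ^ (p - 2) * ⟪a, b⟫ ≤
          C * (‖b‖ ^ 2 * (‖a‖ + ‖b‖) ^ (p - 2)) :=
  exists_inv_mul_le_norm_add_rpow_sub_and_le_mul p hp₁

theorem stmt_5 (p : ℝ) (hp₁ : 1 < p) (d : ℕ) (hd : 1 ≤ d) :
    ∃ C : ℝ, 1 ≤ C ∧ ∀ a b : EuclideanSpace ℝ (Fin d),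
      C⁻¹ * (‖b‖ ^ 2 * (‖a‖ + ‖b‖) ^ (p - 2)) ≤
          ‖a + b‖ ^ p - ‖a‖ ^ p - p * ‖a‖ ^ (p - 2) * ⟪a, b⟫ ∧
        ‖a + b‖ ^ p - ‖a‖ ^ p - p * ‖a‖ ^ (p - 2) * ⟪a, b⟫ ≤
          C * (‖b‖ ^ 2 * (‖a‖ + ‖b‖) ^ (p - 2)) :=
  stmt_5_general p hp₁ d
end

section
/- Let d ≥ 2, 1 < p < d, and α ≥ 0. Define ψ_α(r) := (α + r^{p/(p-1)})^{-(d-p)(p-1)/p²} for r > 0 and W_α(r) := -((d-p)/p)^p · (α·d·p/(d-p) + r^{p/(p-1)}) / (α + r^{p/(p-1)})^p. Then ψ_α is a positive solution on (0,∞) of the radial equation -|ψ'|^{p-2}[(p-1)ψ'' + ((d-1)/r)ψ'] + W_α(r)|ψ|^{p-2}ψ = 0. -/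
open Real

/-!
Write `q = p / (p - 1)` for the conjugate exponent, `A = α + r ^ q`, `c = (d - p) / p` and
`β = c / q`, so that `ψ = A ^ (-β)` and `ψ' = -c r ^ (q - 1) A ^ (-β - 1) < 0`. Because
`(p - 1) (q - 1) = 1`, all powers of `r` cancel in `|ψ'| ^ (p - 2) ((p - 1) ψ'' + (d - 1) ψ' / r)`,
which equals `-c ^ (p - 1) A ^ (-β (p - 1) - p) (d α + c r ^ q)`; and `W ψ ^ (p - 1)` is exactly the
same expression.
-/

section AddRpowProfile

variable {α q r : ℝ}

theorem add_rpow_pos (hα : 0 ≤ α) (hr : 0 < r) : 0 < α + r ^ q := by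
  have := rpow_pos_of_pos hr q
  linarith

theorem hasDerivAt_add_rpow_rpow (hα : 0 ≤ α) (hr : 0 < r) (b : ℝ) :
    HasDerivAt (fun s => (α + s ^ q) ^ b) (b * q * r ^ (q - 1) * (α + r ^ q) ^ (b - 1)) r :=
  (((hasDerivAt_rpow_const (Or.inl hr.ne')).const_add α).rpow_const
    (Or.inl (add_rpow_pos hα hr).ne')).congr_deriv (by ring)

theorem hasDerivAt_rpow_mul_add_rpow_rpow (hα : 0 ≤ α) (hr : 0 < r) (a b : ℝ) :
    HasDerivAt (fun s => s ^ a * (α + s ^ q) ^ b)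
      (r ^ (a - 1) * (α + r ^ q) ^ (b - 1) * (a * (α + r ^ q) + b * q * r ^ q)) r := by
  refine ((hasDerivAt_rpow_const (Or.inl hr.ne')).fun_mul
    (hasDerivAt_add_rpow_rpow hα hr b)).congr_deriv ?_
  have hr_pow : r ^ a = r ^ (a - 1) * r := by rw [← rpow_add_one hr.ne']; ring_nf
  have hr_pow' : r ^ (q - 1) * r = r ^ q := by rw [← rpow_add_one hr.ne']; ring_nf
  have hA_pow : (α + r ^ q) ^ b = (α + r ^ q) ^ (b - 1) * (α + r ^ q) := by
    rw [← rpow_add_one (add_rpow_pos hα hr).ne']; ring_nf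
  rw [hr_pow, hA_pow, ← hr_pow']
  ring

theorem deriv_add_rpow_rpow (hα : 0 ≤ α) (hr : 0 < r) (b : ℝ) :
    deriv (fun s => (α + s ^ q) ^ b) r = b * q * r ^ (q - 1) * (α + r ^ q) ^ (b - 1) :=
  (hasDerivAt_add_rpow_rpow hα hr b).deriv

theorem deriv_deriv_add_rpow_rpow (hα : 0 ≤ α) (hr : 0 < r) (b : ℝ) :
    deriv (deriv fun s => (α + s ^ q) ^ b) r =
      b * q * (r ^ (q - 2) * (α + r ^ q) ^ (b - 2) *
        ((q - 1) * (α + r ^ q) + (b - 1) * q * r ^ q)) := by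
  have hderiv : deriv (fun s => (α + s ^ q) ^ b) =ᶠ[nhds r]
      fun s => b * q * (s ^ (q - 1) * (α + s ^ q) ^ (b - 1)) := by
    filter_upwards [Ioi_mem_nhds hr] with s hs
    rw [deriv_add_rpow_rpow hα hs]
    ring
  rw [hderiv.deriv_eq,
    ((hasDerivAt_rpow_mul_add_rpow_rpow hα hr (q - 1) (b - 1)).const_mul (b * q)).deriv]
  simp only [sub_sub, one_add_one_eq_two]

end AddRpowProfile

theorem Real.HolderConjugate.rpow_sub_two_mul_eq {p q β c r A : ℝ} (hpq : p.HolderConjugate q)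
    (hc : 0 < c) (hr : 0 < r) (hA : 0 < A) :
    (c * r ^ (q - 1) * A ^ (-β - 1)) ^ (p - 2) * (c * r ^ (q - 2) * A ^ (-β - 2)) =
      c ^ (p - 1) * A ^ (-(β * (p - 1)) - p) := by
  have hc_pow : c ^ (p - 2) * c = c ^ (p - 1) := by rw [← rpow_add_one hc.ne']; ring_nf
  have hr_pow : r ^ ((q - 1) * (p - 2)) * r ^ (q - 2) = 1 := by
    rw [← rpow_add hr, show (q - 1) * (p - 2) + (q - 2) = 0 by
      linear_combination hpq.sub_one_mul_conj, rpow_zero]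
  have hA_pow : A ^ ((-β - 1) * (p - 2)) * A ^ (-β - 2) = A ^ (-(β * (p - 1)) - p) := by
    rw [← rpow_add hA]; ring_nf
  rw [mul_rpow (by positivity) (by positivity), mul_rpow hc.le (by positivity),
    ← rpow_mul hr.le, ← rpow_mul hA.le, ← hc_pow, ← hA_pow]
  linear_combination (c ^ (p - 2) * c * A ^ ((-β - 1) * (p - 2)) * A ^ (-β - 2)) * hr_pow

/-- For `u x = f ‖x‖` on `ℝ^d \ {0}`, `Δ_p u x = radialPLaplacian d p f ‖x‖` wherever
`f' ‖x‖ ≠ 0`. -/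
noncomputable def radialPLaplacian (d p : ℝ) (f : ℝ → ℝ) (r : ℝ) : ℝ :=
  |deriv f r| ^ (p - 2) * ((p - 1) * deriv (deriv f) r + ((d - 1) / r) * deriv f r)

theorem radialPLaplacian_add_rpow_rpow {d p q α β r : ℝ} (hpq : p.HolderConjugate q)
    (hβ : β * q = (d - p) / p) (hdp : p < d) (hα : 0 ≤ α) (hr : 0 < r) :
    radialPLaplacian d p (fun s => (α + s ^ q) ^ (-β)) r =
      -(((d - p) / p) ^ (p - 1) * (α + r ^ q) ^ (-(β * (p - 1)) - p) *
        (d * α + (d - p) / p * r ^ q)) := by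
  have hp := hpq.pos
  have hc : 0 < (d - p) / p := div_pos (sub_pos.2 hdp) hp
  have hA := add_rpow_pos (q := q) hα hr
  set c := (d - p) / p with hc_def
  set A := α + r ^ q with hA_def
  have hcp : c * p = d - p := by rw [hc_def]; field_simp
  clear_value c A
  have hpq₁ : (p - 1) * (q - 1) = 1 := by linear_combination hpq.sub_one_mul_conj
  have hβp : β * p = d - p - c := by
    linear_combination (p - 1) * hβ - β * hpq.mul_eq_add + hcp
  have hψ' : deriv (fun s => (α + s ^ q) ^ (-β)) r = -(c * r ^ (q - 1) * A ^ (-β - 1)) := by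
    rw [deriv_add_rpow_rpow hα hr, ← hβ, ← hA_def]; ring
  have hψ'' : deriv (deriv fun s => (α + s ^ q) ^ (-β)) r =
      -(c * r ^ (q - 2) * A ^ (-β - 2) * ((q - 1) * A - (β + 1) * q * r ^ q)) := by
    rw [deriv_deriv_add_rpow_rpow hα hr, ← hβ, ← hA_def]; ring
  have hr_div : (d - 1) / r * r ^ (q - 1) = (d - 1) * r ^ (q - 2) := by
    rw [show q - 2 = q - 1 - 1 by ring, rpow_sub_one hr.ne' (q - 1)]
    ring
  have hA_pow : A ^ (-β - 1) = A ^ (-β - 2) * A := by rw [← rpow_add_one hA.ne']; ring_nf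
  have hbracket : (p - 1) * deriv (deriv fun s => (α + s ^ q) ^ (-β)) r +
      (d - 1) / r * deriv (fun s => (α + s ^ q) ^ (-β)) r =
      -(c * r ^ (q - 2) * A ^ (-β - 2) * (d * α + c * r ^ q)) := by
    rw [hψ', hψ'', hA_pow]
    linear_combination (-(c * A ^ (-β - 2) * A)) * hr_div - (c * A ^ (-β - 2) * r ^ (q - 2)) *
      (A * hpq₁ - (β + 1) * r ^ q * hpq.sub_one_mul_conj - r ^ q * hβp + d * hA_def)
  unfold radialPLaplacian
  rw [hbracket, hψ', abs_neg, abs_of_pos (by positivity)]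
  linear_combination (-(d * α + c * r ^ q)) * hpq.rpow_sub_two_mul_eq (β := β) hc hr hA

theorem weight_mul_abs_rpow_mul_rpow {d p α β x A : ℝ} (hp : 0 < p) (hdp : p < d) (hA : 0 < A) :
    -((d - p) / p) ^ p * (α * d * p / (d - p) + x) / A ^ p * |A ^ (-β)| ^ (p - 2) * A ^ (-β) =
      -(((d - p) / p) ^ (p - 1) * A ^ (-(β * (p - 1)) - p) * (d * α + (d - p) / p * x)) := by
  have hdp' : d - p ≠ 0 := (sub_pos.2 hdp).ne'
  have hc : 0 < (d - p) / p := div_pos (sub_pos.2 hdp) hp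
  have hc_pow : ((d - p) / p) ^ p = ((d - p) / p) ^ (p - 1) * ((d - p) / p) := by
    rw [← rpow_add_one hc.ne']; ring_nf
  have hA_pow : (A ^ (-β)) ^ (p - 2) * A ^ (-β) = A ^ (-(β * (p - 1)) - p) * A ^ p := by
    rw [← rpow_mul hA.le, ← rpow_add hA, ← rpow_add hA]; ring_nf
  rw [abs_of_pos (rpow_pos_of_pos hA _), hc_pow, mul_assoc _ _ (A ^ (-β)), hA_pow]
  field_simp

theorem stmt_9_general (d : ℕ) (p : ℝ) (hp₁ : 1 < p) (hp₂ : p < d) (α : ℝ) (hα : 0 ≤ α)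
    (ψ W : ℝ → ℝ)
    (hψ : ∀ r : ℝ, ψ r = (α + r ^ (p / (p - 1))) ^ (-((d - p) * (p - 1) / p ^ 2)))
    (hW : ∀ r : ℝ, W r = -((d - p) / p) ^ p *
        (α * d * p / (d - p) + r ^ (p / (p - 1))) / (α + r ^ (p / (p - 1))) ^ p) :
    ∀ r : ℝ, 0 < r →
      0 < ψ r ∧
      -(|deriv ψ r| ^ (p - 2) *
            ((p - 1) * deriv (deriv ψ) r + ((d - 1) / r) * deriv ψ r)) +
          W r * |ψ r| ^ (p - 2) * ψ r = 0 := by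
  intro r hr
  have hpq : p.HolderConjugate (p / (p - 1)) := (holderConjugate_iff_eq_conjExponent hp₁).2 rfl
  have hβ : (d - p) * (p - 1) / p ^ 2 * (p / (p - 1)) = (d - p) / p := by
    field_simp [hpq.sub_one_ne_zero]
  have hA := add_rpow_pos (q := p / (p - 1)) hα hr
  obtain rfl : ψ = fun s => (α + s ^ (p / (p - 1))) ^ (-((d - p) * (p - 1) / p ^ 2)) := funext hψ
  refine ⟨rpow_pos_of_pos hA _, ?_⟩
  have hlap := radialPLaplacian_add_rpow_rpow hpq hβ hp₂ hα hr
  unfold radialPLaplacian at hlap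
  rw [hlap, hW, weight_mul_abs_rpow_mul_rpow hpq.pos hp₂ hA]
  ring

theorem stmt_9 (d : ℕ) (hd : 2 ≤ d) (p : ℝ) (hp₁ : 1 < p) (hp₂ : p < d) (α : ℝ) (hα : 0 ≤ α)
    (ψ W : ℝ → ℝ)
    (hψ : ∀ r : ℝ, ψ r = (α + r ^ (p / (p - 1))) ^ (-((d - p) * (p - 1) / p ^ 2)))
    (hW : ∀ r : ℝ, W r = -((d - p) / p) ^ p *
        (α * d * p / (d - p) + r ^ (p / (p - 1))) / (α + r ^ (p / (p - 1))) ^ p) :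
    ∀ r : ℝ, 0 < r →
      0 < ψ r ∧
      -(|deriv ψ r| ^ (p - 2) *
            ((p - 1) * deriv (deriv ψ) r + ((d - 1) / r) * deriv ψ r)) +
          W r * |ψ r| ^ (p - 2) * ψ r = 0 :=
  stmt_9_general d p hp₁ hp₂ α hα ψ W hψ hW
end

section
/- Let d, p be reals with 1 < p < d. The function u(x) := (1 + |x|^{p/(p-1)})^{(p-d)/p} is a positive supersolution of -Δ_p u = 0 on ℝ^d, i.e., its radial profile v(r) = (1 + r^{p/(p-1)})^{(p-d)/p} satisfies -(|v'|^{p-2}v')' - ((d-1)/r)|v'|^{p-2}v' ≥ 0 for all r > 0. -/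
/-!
Put `q = p/(p-1)` and `α = (p-d)/p`, so that `v = (1 + r^q)^α` with `α q = -(d-p)/(p-1) < 0`.
Because `(q-1)(p-1) = 1`, the flux `|v'|^(p-2) v'` simplifies to `-c r (1 + r^q)^β` with
`c = ((d-p)/(p-1))^(p-1) > 0` and `β = (α-1)(p-1) = -d/q`. For a flux of this shape
`-w' - (d-1)/r w = c (1 + r^q)^(β-1) (d + (d + qβ) r^q)`, and `qβ = -d` kills the second term,
leaving `c d (1 + r^q)^(β-1) > 0`.
-/

open Real Filter Topology

noncomputable def pFlux (p : ℝ) (v : ℝ → ℝ) (s : ℝ) : ℝ :=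
  |deriv v s| ^ (p - 2) * deriv v s

theorem pFlux_eq_neg_rpow {p x s : ℝ} {v : ℝ → ℝ} (hv : HasDerivAt v (-x) s) (hx : 0 < x) :
    pFlux p v s = -x ^ (p - 1) := by
  rw [pFlux, hv.deriv, abs_neg, abs_of_pos hx, mul_neg, ← rpow_add_one hx.ne']
  ring_nf

theorem one_add_rpow_pos {q s : ℝ} (hs : 0 < s) : 0 < 1 + s ^ q := by
  have := rpow_pos_of_pos hs q
  linarith

theorem hasDerivAt_one_add_rpow {q s : ℝ} (hs : 0 < s) :
    HasDerivAt (fun s : ℝ => 1 + s ^ q) (q * s ^ (q - 1)) s := by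
  simpa using (hasDerivAt_rpow_const (Or.inl hs.ne')).const_add 1

theorem hasDerivAt_one_add_rpow_rpow {q α s : ℝ} (hs : 0 < s) :
    HasDerivAt (fun s : ℝ => (1 + s ^ q) ^ α)
      (q * s ^ (q - 1) * α * (1 + s ^ q) ^ (α - 1)) s :=
  (hasDerivAt_one_add_rpow hs).rpow_const (Or.inl (one_add_rpow_pos hs).ne')

theorem pFlux_one_add_rpow_rpow {p q α s : ℝ} (hq : 0 < q) (hα : α < 0)
    (hqp : (q - 1) * (p - 1) = 1) (hs : 0 < s) :
    pFlux p (fun s : ℝ => (1 + s ^ q) ^ α) s =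
      -((-(α * q)) ^ (p - 1) * (s * (1 + s ^ q) ^ ((α - 1) * (p - 1)))) := by
  have hb := one_add_rpow_pos (q := q) hs
  have hA : 0 < -(α * q) := by nlinarith
  have hslope : 0 < -(α * q) * (s ^ (q - 1) * (1 + s ^ q) ^ (α - 1)) := by positivity
  have hderiv := hasDerivAt_one_add_rpow_rpow (q := q) (α := α) hs
  rw [pFlux_eq_neg_rpow (hderiv.congr_deriv (by ring)) hslope,
    mul_rpow hA.le (by positivity), mul_rpow (by positivity) (by positivity),
    ← rpow_mul hs.le, hqp, rpow_one, ← rpow_mul hb.le]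

theorem neg_deriv_sub_div_mul_of_eventuallyEq {w : ℝ → ℝ} {c q β d r : ℝ} (hr : 0 < r)
    (hw : w =ᶠ[𝓝 r] fun s => -(c * (s * (1 + s ^ q) ^ β))) :
    -deriv w r - (d - 1) / r * w r =
      c * (1 + r ^ q) ^ (β - 1) * (d + (d + q * β) * r ^ q) := by
  have hb := one_add_rpow_pos (q := q) hr
  have hderiv : HasDerivAt (fun s => -(c * (s * (1 + s ^ q) ^ β)))
      (-(c * (1 * (1 + r ^ q) ^ β + r * (q * r ^ (q - 1) * β * (1 + r ^ q) ^ (β - 1))))) r :=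
    (((hasDerivAt_id r).mul (hasDerivAt_one_add_rpow_rpow hr)).const_mul c).neg
  rw [hw.deriv_eq, hderiv.deriv, hw.eq_of_nhds,
    show (1 + r ^ q) ^ β = (1 + r ^ q) ^ (β - 1) * (1 + r ^ q) by
      rw [← rpow_add_one hb.ne', sub_add_cancel],
    rpow_sub hr, rpow_one]
  field_simp
  ring

theorem stmt_10 (d p : ℝ) (hp₁ : 1 < p) (hp₂ : p < d)
    (v : ℝ → ℝ) (hv : ∀ r : ℝ, v r = (1 + r ^ (p / (p - 1))) ^ ((p - d) / p)) :
    ∀ r : ℝ, 0 < r →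
      0 < v r ∧
      0 ≤ -(deriv (fun s => |deriv v s| ^ (p - 2) * deriv v s) r) -
          ((d - 1) / r) * (|deriv v r| ^ (p - 2) * deriv v r) := by
  intro r hr
  set q := p / (p - 1)
  set α := (p - d) / p
  have hp : 0 < p - 1 := by linarith
  have hq : 0 < q := by positivity
  have hα : α < 0 := div_neg_of_neg_of_pos (by linarith) (by linarith)
  have hqp : (q - 1) * (p - 1) = 1 := by simp only [q]; field_simp; ring
  have hβq : q * ((α - 1) * (p - 1)) = -d := by simp only [q, α]; field_simp; ring
  obtain rfl : v = fun s => (1 + s ^ q) ^ α := funext hv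
  refine ⟨rpow_pos_of_pos (one_add_rpow_pos hr) α, ?_⟩
  have hflux : pFlux p (fun s => (1 + s ^ q) ^ α) =ᶠ[𝓝 r]
      fun s => -((-(α * q)) ^ (p - 1) * (s * (1 + s ^ q) ^ ((α - 1) * (p - 1)))) :=
    eventually_gt_nhds hr |>.mono fun s hs => pFlux_one_add_rpow_rpow hq hα hqp hs
  change 0 ≤ -deriv (pFlux p _) r - (d - 1) / r * pFlux p _ r
  rw [neg_deriv_sub_div_mul_of_eventuallyEq hr hflux, hβq, add_neg_cancel, zero_mul, add_zero]
  have hA : 0 < -(α * q) := by nlinarith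
  have hd : 0 < d := by linarith
  positivity
end

section
/- Let p > 2, d ≥ 2, and suppose φ : (0,∞) → (0,∞) is C¹ with φ(r) ≍ r^β for some β > (p-d)/p, β ≠ 0, and |φ'(r)| = e^{-r} on each interval [2n+1/4, 2n+3/4] (n = 1, 2, …). Then M₁^φ := ∫₁^∞ (φ^p r^{d-1})^{-1/(p-1)} dr < ∞ while M₂^φ := ∫₁^∞ φ^{-2} |φ'|^{2-p} r^{1-d} dr = ∞, provided p ≤ d. -/
/-!
The lower bound `φ r ≥ C⁻¹ r^β` makes the `M₁`-integrand `O(r^(-(βp + d - 1)/(p - 1)))`, and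
`βp + d - 1 > p - 1` is exactly `β > (p - d)/p`. For `M₂`, on `[2n + 1/4, 2n + 3/4]` the upper
bound `φ r ≤ C r^β` and `|φ'| = e^(-r)` give the integrand at least
`C⁻² e^((p-2)r) / r^(2β + d - 1)`, which tends to `∞` because `p > 2`; these intervals have
fixed length `1/2`, so `M₂ = ∞`.
-/

open Real MeasureTheory Set Filter

theorem rpow_mul_rpow_rpow_le {x c r β p q e : ℝ} (hc : 0 < c) (hr : 0 < r) (hp : 0 ≤ p)
    (he : e ≤ 0) (hx : c * r ^ β ≤ x) :
    (x ^ p * r ^ q) ^ e ≤ c ^ (p * e) * r ^ ((β * p + q) * e) := by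
  calc (x ^ p * r ^ q) ^ e ≤ ((c * r ^ β) ^ p * r ^ q) ^ e :=
        rpow_le_rpow_of_nonpos (by positivity) (by gcongr) he
    _ = c ^ (p * e) * r ^ ((β * p + q) * e) := by
        rw [mul_rpow hc.le (by positivity), ← rpow_mul hr.le, mul_assoc, ← rpow_add hr,
          mul_rpow (by positivity) (by positivity), ← rpow_mul hc.le, ← rpow_mul hr.le]

theorem le_rpow_neg_two_mul_exp_rpow_mul_rpow {x y C r β p q : ℝ} (hx : 0 < x) (hC : 0 < C)
    (hr : 0 < r) (hxC : x ≤ C * r ^ β) (hy : y = exp (-r)) :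
    C ^ (-2 : ℝ) * (exp ((p - 2) * r) / r ^ (2 * β - q)) ≤ x ^ (-2 : ℝ) * y ^ (2 - p) * r ^ q := by
  have hφ : (C * r ^ β) ^ (-2 : ℝ) ≤ x ^ (-2 : ℝ) := rpow_le_rpow_of_nonpos hx hxC (by norm_num)
  rw [mul_rpow hC.le (by positivity), ← rpow_mul hr.le] at hφ
  have hy' : y ^ (2 - p) = exp ((p - 2) * r) := by rw [hy, ← exp_mul]; ring_nf
  have hr' : (r ^ (2 * β - q))⁻¹ = r ^ (β * -2) * r ^ q := by
    rw [← rpow_neg hr.le, ← rpow_add hr]; ring_nf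
  calc C ^ (-2 : ℝ) * (exp ((p - 2) * r) / r ^ (2 * β - q))
      = C ^ (-2 : ℝ) * r ^ (β * -2) * exp ((p - 2) * r) * r ^ q := by
        rw [div_eq_mul_inv, hr']; ring
    _ ≤ x ^ (-2 : ℝ) * y ^ (2 - p) * r ^ q := by rw [hy']; gcongr

theorem setLIntegral_ofReal_eq_top_of_forall_Icc {f : ℝ → ℝ} {s : Set ℝ} {δ : ℝ} (hδ : 0 < δ)
    (h : ∀ K : ℝ, ∃ a, Icc a (a + δ) ⊆ s ∧ ∀ r ∈ Icc a (a + δ), K ≤ f r) :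
    ∫⁻ r in s, ENNReal.ofReal (f r) = ⊤ := by
  refine ENNReal.eq_top_of_forall_nnreal_le fun K => ?_
  obtain ⟨a, hsub, hle⟩ := h (K / δ)
  calc (K : ENNReal) = ∫⁻ _ in Icc a (a + δ), ENNReal.ofReal (K / δ) := by
        rw [setLIntegral_const, Real.volume_Icc, add_sub_cancel_left,
          ← ENNReal.ofReal_mul (by positivity), div_mul_cancel₀ _ hδ.ne', ENNReal.ofReal_coe_nnreal]
    _ ≤ ∫⁻ r in Icc a (a + δ), ENNReal.ofReal (f r) :=
        setLIntegral_mono' measurableSet_Icc fun r hr => ENNReal.ofReal_le_ofReal (hle r hr)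
    _ ≤ ∫⁻ r in s, ENNReal.ofReal (f r) := lintegral_mono_set hsub

theorem integrableOn_Ioi_of_le_rpow {f : ℝ → ℝ} {c a : ℝ} (hf : ContinuousOn f (Ioi 1))
    (ha : a < -1) (hle : ∀ r, 1 < r → ‖f r‖ ≤ c * r ^ a) : IntegrableOn f (Ioi 1) :=
  ((integrableOn_Ioi_rpow_of_lt ha one_pos).const_mul c).mono'
    (hf.aestronglyMeasurable measurableSet_Ioi)
    ((ae_restrict_iff' measurableSet_Ioi).2 (.of_forall hle))

theorem integrableOn_M₁_integrand {p d β C : ℝ} {φ : ℝ → ℝ} (hp : 1 < p) (hβ : (p - d) / p < β)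
    (hφpos : ∀ r, 0 < r → 0 < φ r) (hφ : ContinuousOn φ (Ioi 0)) (hC : 0 < C)
    (hlower : ∀ r, 1 ≤ r → C⁻¹ * r ^ β ≤ φ r) :
    IntegrableOn (fun r => (φ r ^ p * r ^ (d - 1)) ^ (-1 / (p - 1))) (Ioi 1) := by
  have hpos : ∀ r ∈ Ioi (1 : ℝ), 0 < φ r ^ p * r ^ (d - 1) := fun r hr =>
    mul_pos (rpow_pos_of_pos (hφpos r (one_pos.trans hr)) p) (rpow_pos_of_pos (one_pos.trans hr) _)
  have hcont : ContinuousOn (fun r => (φ r ^ p * r ^ (d - 1)) ^ (-1 / (p - 1))) (Ioi 1) := by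
    refine ContinuousOn.rpow_const (ContinuousOn.mul ?_ ?_) fun r hr => .inl (hpos r hr).ne'
    · exact (hφ.mono (Ioi_subset_Ioi zero_le_one)).rpow_const fun r hr =>
        .inl (hφpos r (one_pos.trans hr)).ne'
    · exact continuousOn_id.rpow_const fun r hr => .inl (one_pos.trans hr).ne'
  have hexp : (β * p + (d - 1)) * (-1 / (p - 1)) < -1 := by
    have : p - d < β * p := by linarith [(div_lt_iff₀ (by linarith : (0 : ℝ) < p)).1 hβ]
    have : 1 < (β * p + (d - 1)) / (p - 1) := (one_lt_div (by linarith)).2 (by linarith)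
    rw [mul_div, mul_neg_one, neg_div]
    linarith
  refine integrableOn_Ioi_of_le_rpow (c := C⁻¹ ^ (p * (-1 / (p - 1)))) hcont hexp fun r hr => ?_
  rw [Real.norm_of_nonneg (rpow_pos_of_pos (hpos r hr) _).le]
  exact rpow_mul_rpow_rpow_le (inv_pos.2 hC) (one_pos.trans hr) (by linarith)
    (div_nonpos_of_nonpos_of_nonneg (by norm_num) (by linarith)) (hlower r hr.le)

theorem lintegral_M₂_integrand_eq_top {p d β C : ℝ} {φ g : ℝ → ℝ} (hp : 2 < p)
    (hφpos : ∀ r, 0 < r → 0 < φ r) (hC : 0 < C) (hupper : ∀ r, 1 ≤ r → φ r ≤ C * r ^ β)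
    (hg : ∀ n : ℕ, 1 ≤ n → ∀ r : ℝ, 2 * n + 1 / 4 ≤ r → r ≤ 2 * n + 3 / 4 → |g r| = exp (-r)) :
    ∫⁻ r in Ioi 1, ENNReal.ofReal (φ r ^ (-2 : ℝ) * |g r| ^ (2 - p) * r ^ (1 - d)) = ⊤ := by
  refine setLIntegral_ofReal_eq_top_of_forall_Icc one_half_pos fun K => ?_
  obtain ⟨R, hR⟩ := eventually_atTop.1 <|
    ((tendsto_exp_mul_div_rpow_atTop (2 * β - (1 - d)) (p - 2) (by linarith)).const_mul_atTop
      (rpow_pos_of_pos hC (-2))).eventually_ge_atTop K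
  obtain ⟨n, hn⟩ := exists_nat_ge (max 1 R)
  have hn1 : (1 : ℝ) ≤ n := (le_max_left _ _).trans hn
  refine ⟨2 * n + 1 / 4, fun r hr => mem_Ioi.2 (by linarith [hr.1]), fun r hr => ?_⟩
  have hr1 : 1 ≤ r := by linarith [hr.1]
  exact (hR r (by linarith [hr.1, le_max_right 1 R])).trans <|
    le_rpow_neg_two_mul_exp_rpow_mul_rpow (hφpos r (by linarith)) hC (by linarith) (hupper r hr1)
      (hg n (by exact_mod_cast hn1) r hr.1 (by linarith [hr.2]))

theorem stmt_19_general (p : ℝ) (hp : 2 < p) (d : ℕ)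
    (β : ℝ) (hβ₁ : (p - d) / p < β)
    (φ : ℝ → ℝ) (hφpos : ∀ r : ℝ, 0 < r → 0 < φ r)
    (hφC1 : ContDiffOn ℝ 1 φ (Set.Ioi 0))
    (hasymp : ∃ C : ℝ, 1 ≤ C ∧ ∀ r : ℝ, 1 ≤ r → C⁻¹ * r ^ β ≤ φ r ∧ φ r ≤ C * r ^ β)
    (hderiv : ∀ n : ℕ, 1 ≤ n → ∀ r : ℝ,
        2 * n + 1 / 4 ≤ r → r ≤ 2 * n + 3 / 4 → |deriv φ r| = Real.exp (-r)) :
    IntegrableOn (fun r : ℝ => (φ r ^ p * r ^ ((d : ℝ) - 1)) ^ (-1 / (p - 1))) (Set.Ioi 1) ∧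
    (∫⁻ r in Set.Ioi (1 : ℝ),
        ENNReal.ofReal (φ r ^ (-2 : ℝ) * |deriv φ r| ^ (2 - p) * r ^ (1 - (d : ℝ)))) = ⊤ := by
  obtain ⟨C, hC, hbound⟩ := hasymp
  have hC0 : 0 < C := one_pos.trans_le hC
  exact ⟨integrableOn_M₁_integrand (by linarith) hβ₁ hφpos hφC1.continuousOn hC0
      fun r hr => (hbound r hr).1,
    lintegral_M₂_integrand_eq_top hp hφpos hC0 (fun r hr => (hbound r hr).2) hderiv⟩

theorem stmt_19 (p : ℝ) (hp : 2 < p) (d : ℕ) (hd : 2 ≤ d) (hpd : p ≤ d)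
    (β : ℝ) (hβ₁ : (p - d) / p < β) (hβ₂ : β ≠ 0)
    (φ : ℝ → ℝ) (hφpos : ∀ r : ℝ, 0 < r → 0 < φ r)
    (hφC1 : ContDiffOn ℝ 1 φ (Set.Ioi 0))
    (hasymp : ∃ C : ℝ, 1 ≤ C ∧ ∀ r : ℝ, 1 ≤ r → C⁻¹ * r ^ β ≤ φ r ∧ φ r ≤ C * r ^ β)
    (hderiv : ∀ n : ℕ, 1 ≤ n → ∀ r : ℝ,
        2 * n + 1 / 4 ≤ r → r ≤ 2 * n + 3 / 4 → |deriv φ r| = Real.exp (-r)) :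
    IntegrableOn (fun r : ℝ => (φ r ^ p * r ^ ((d : ℝ) - 1)) ^ (-1 / (p - 1))) (Set.Ioi 1) ∧
    (∫⁻ r in Set.Ioi (1 : ℝ),
        ENNReal.ofReal (φ r ^ (-2 : ℝ) * |deriv φ r| ^ (2 - p) * r ^ (1 - (d : ℝ)))) = ⊤ :=
  stmt_19_general p hp d β hβ₁ φ hφpos hφC1 hasymp hderiv
end
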